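/- Let S be a commutative semiring, H a Hopf S-semialgebra with antipode 𝔞, and M an S-semimodule equipped with a right H-module structure and an S-linear coaction ρ : M → M ⊗_S H which is coassociative, counital, and satisfies the Hopf-semimodule compatibility ρ(m·h) = Σ m_{<0>}·h_1 ⊗ m_{<1>}·h_2 for all m ∈ M, h ∈ H. Let M^{coH} := { m ∈ M | ρ(m) = m ⊗ 1_H } be the S-subsemimodule of coinvariants. Then the S-linear map ψ_M : M^{coH} ⊗_S H → M, m ⊗ h ↦ m·h, is bijective, with inverse given by m ↦ Σ (m_{<0>}·𝔞(m_{<1>})) ⊗ m_{<2>}. -/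

import Mathlib

/-!
STATEMENT 9: Let `S` be a commutative semiring, `H` a Hopf `S`-semialgebra
with antipode `𝔞`, and `M` a right-right Hopf `H`-semimodule (a right
`H`-module with a coassociative counital coaction `ρ : M → M ⊗[S] H`
satisfying `ρ (m·h) = Σ m₍₀₎·h₁ ⊗ m₍₁₎·h₂`).  Then the `S`-linear map
`ψ : M^{coH} ⊗[S] H → M`, `m ⊗ h ↦ m·h`, is bijective, with inverse
`m ↦ Σ (m₍₀₎·𝔞 m₍₁₎) ⊗ m₍₂₎`.
-/

open TensorProduct

variable (S : Type*) [CommSemiring S] (H : Type*) [Semiring H] [HopfAlgebra S H]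
variable (M : Type*) [AddCommMonoid M] [Module S M] [Module Hᵐᵒᵖ M]
  [IsScalarTower S Hᵐᵒᵖ M]

/-- The right `H`-action on `M`, as an `S`-linear map `M ⊗[S] H →ₗ[S] M`,
`m ⊗ h ↦ m · h`. -/
noncomputable def ractionMap : M ⊗[S] H →ₗ[S] M :=
  TensorProduct.lift <| LinearMap.mk₂ S (fun m h => MulOpposite.op h • m)
    (fun m m' h => smul_add _ _ _)
    (fun s m h => by
      show MulOpposite.op h • (s • m) = s • (MulOpposite.op h • m)
      rw [← algebraMap_smul Hᵐᵒᵖ s m, ← mul_smul,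
        ← Algebra.commutes s (MulOpposite.op h), mul_smul, algebraMap_smul])
    (fun m h h' => by
      show MulOpposite.op (h + h') • m = MulOpposite.op h • m + MulOpposite.op h' • m
      rw [MulOpposite.op_add, add_smul])
    (fun s m h => by
      show MulOpposite.op (s • h) • m = s • (MulOpposite.op h • m)
      rw [MulOpposite.op_smul, smul_assoc])

/-- The `S`-subsemimodule of coinvariants `M^{coH} = { m | ρ m = m ⊗ 1 }`. -/
noncomputable def coinvariants (ρ : M →ₗ[S] M ⊗[S] H) : Submodule S M where
  carrier := { m | ρ m = m ⊗ₜ[S] (1 : H) }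
  add_mem' := by
    intro a b ha hb
    simp only [Set.mem_setOf_eq] at *
    rw [map_add, ha, hb, add_tmul]
  zero_mem' := by simp only [Set.mem_setOf_eq, map_zero, zero_tmul]
  smul_mem' := by
    intro s a ha
    simp only [Set.mem_setOf_eq] at *
    rw [map_smul, ha, smul_tmul']

/-!
The inverse is built from the projection `P m = Σ m₍₀₎ · 𝔞 m₍₁₎`. Coassociativity, counitality
and the antipode axiom `Σ 𝔞 h₁ h₂ = ε h` give `Σ P(m₍₀₎) · m₍₁₎ = m`, so `ψ` is surjective; the
compatibility of `ρ` with the action gives, for coinvariant `c`, `ρ (c · h) = Σ c · h₁ ⊗ h₂` and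
`P (c · h) = ε h • c`, so `m ↦ Σ P(m₍₀₎) ⊗ m₍₁₎` is a left inverse of `ψ`. The remaining point is
that `P m` is coinvariant, which amounts to the identity `Σ (1 ⊗ h₁) · Δ(𝔞 h₂) = 𝔞 h ⊗ 1`
in `H ⊗ H`. It is proved in the convolution algebra `Hom(H, H ⊗ H)`, without the
anti-comultiplicativity of `𝔞`: there `Δ = ι₁ * ι₂` for the two inclusions, `ι₁ ∘ 𝔞` is a
convolution inverse of `ι₁`, and `Δ ∘ 𝔞` one of `Δ`.
-/

section Convolution

open Coalgebra HopfAlgebra WithConv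

variable {R A : Type*} [CommSemiring R] [Semiring A]

lemma includeLeft_convMul_includeRight [Algebra R A] [CoalgebraStruct R A] :
    toConv (Algebra.TensorProduct.includeLeft (S := R)).toLinearMap *
      toConv Algebra.TensorProduct.includeRight.toLinearMap = toConv (comul (R := R) (A := A)) := by
  ext a
  rw [LinearMap.convMul_apply]
  induction comul (R := R) a using TensorProduct.induction_on with
  | zero => simp
  | tmul x y => simp
  | add x y hx hy => simp_all

variable [HopfAlgebra R A]

lemma algHom_comp_antipode_convMul_algHom {B : Type*} [Semiring B] [Algebra R B]
    (f : A →ₐ[R] B) : toConv (f.toLinearMap ∘ₗ antipode R) * toConv f.toLinearMap = 1 := by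
  have := LinearMap.algHom_comp_convMul_distrib f (toConv (antipode R)) (toConv LinearMap.id)
  simp only [LinearMap.antipode_mul_id, LinearMap.comp_id] at this
  ext a
  simpa using (LinearMap.congr_fun this a).symm

lemma includeRight_convMul_comul_comp_antipode :
    toConv Algebra.TensorProduct.includeRight.toLinearMap * toConv (comul ∘ₗ antipode R) =
      toConv ((Algebra.TensorProduct.includeLeft (S := R)).toLinearMap ∘ₗ antipode R (A := A)) :=
  calc toConv Algebra.TensorProduct.includeRight.toLinearMap * toConv (comul ∘ₗ antipode R)
      = toConv ((Algebra.TensorProduct.includeLeft (S := R)).toLinearMap ∘ₗ antipode R) *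
          (toConv (Algebra.TensorProduct.includeLeft (S := R)).toLinearMap *
            toConv Algebra.TensorProduct.includeRight.toLinearMap) *
          toConv (comul ∘ₗ antipode R) := by
        rw [← mul_assoc, algHom_comp_antipode_convMul_algHom, one_mul]
    _ = toConv ((Algebra.TensorProduct.includeLeft (S := R)).toLinearMap ∘ₗ antipode R) := by
        rw [includeLeft_convMul_includeRight, mul_assoc, LinearMap.comul_right_inv, mul_one]

end Convolution

section Coaction

variable {R C N : Type*} [CommSemiring R] [AddCommMonoid C] [Module R C] [CoalgebraStruct R C]
  [AddCommMonoid N] [Module R N]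

def IsCoassocCoaction (ρ : N →ₗ[R] N ⊗[R] C) : Prop :=
  ∀ n, TensorProduct.assoc R N C C (ρ.rTensor C (ρ n)) = (Coalgebra.comul (R := R)).lTensor N (ρ n)

def IsCounitalCoaction (ρ : N →ₗ[R] N ⊗[R] C) : Prop :=
  ∀ n, TensorProduct.rid R N ((Coalgebra.counit (R := R)).lTensor N (ρ n)) = n

lemma IsCoassocCoaction.rTensor_apply {ρ : N →ₗ[R] N ⊗[R] C} (hρ : IsCoassocCoaction ρ) (n : N) :
    ρ.rTensor C (ρ n) =
      (TensorProduct.assoc R N C C).symm ((Coalgebra.comul (R := R)).lTensor N (ρ n)) := by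
  rw [LinearEquiv.eq_symm_apply, hρ]

end Coaction

section HopfModule

open Coalgebra HopfAlgebra

variable {S H M}

lemma ractionMap_tmul (m : M) (h : H) : ractionMap S H M (m ⊗ₜ h) = MulOpposite.op h • m := rfl

lemma ractionMap_rTensor_assoc_symm (f : H →ₗ[S] H) (x : M ⊗[S] (H ⊗[S] H)) :
    ractionMap S H M ((ractionMap S H M ∘ₗ f.lTensor M).rTensor H
      ((TensorProduct.assoc S M H H).symm x)) =
      ractionMap S H M ((LinearMap.mul' S H ∘ₗ f.rTensor H).lTensor M x) := by
  have : ractionMap S H M ∘ₗ (ractionMap S H M ∘ₗ f.lTensor M).rTensor H ∘ₗ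
      (TensorProduct.assoc S M H H).symm.toLinearMap =
      ractionMap S H M ∘ₗ (LinearMap.mul' S H ∘ₗ f.rTensor H).lTensor M := by
    ext m a b
    simp [ractionMap_tmul, mul_smul]
  exact LinearMap.congr_fun this x

lemma ractionMap_lTensor_algebraMap (x : M ⊗[S] S) :
    ractionMap S H M ((Algebra.linearMap S H).lTensor M x) = TensorProduct.rid S M x := by
  have : ractionMap S H M ∘ₗ (Algebra.linearMap S H).lTensor M =
      (TensorProduct.rid S M).toLinearMap := by
    ext m
    simp [ractionMap_tmul]
  exact LinearMap.congr_fun this x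

lemma map_ractionMap_mul'_tensorTensorTensorComm (g : H →ₗ[S] H ⊗[S] H)
    (x : M ⊗[S] (H ⊗[S] H)) :
    TensorProduct.map (ractionMap S H M) (LinearMap.mul' S H)
      (TensorProduct.tensorTensorTensorComm S M H H H
        (g.lTensor (M ⊗[S] H) ((TensorProduct.assoc S M H H).symm x))) =
    (ractionMap S H M).rTensor H ((TensorProduct.assoc S M H H).symm
      ((LinearMap.mul' S (H ⊗[S] H) ∘ₗ
        TensorProduct.map Algebra.TensorProduct.includeRight.toLinearMap g).lTensor M x)) := by
  have : TensorProduct.map (ractionMap S H M) (LinearMap.mul' S H) ∘ₗ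
      (TensorProduct.tensorTensorTensorComm S M H H H).toLinearMap ∘ₗ
      g.lTensor (M ⊗[S] H) ∘ₗ (TensorProduct.assoc S M H H).symm.toLinearMap =
    (ractionMap S H M).rTensor H ∘ₗ (TensorProduct.assoc S M H H).symm.toLinearMap ∘ₗ
      (LinearMap.mul' S (H ⊗[S] H) ∘ₗ
        TensorProduct.map Algebra.TensorProduct.includeRight.toLinearMap g).lTensor M := by
    ext m a b
    simp only [AlgebraTensorModule.curry_apply, LinearMap.restrictScalars_self, curry_apply,
      LinearMap.coe_comp, LinearEquiv.coe_coe, Function.comp_apply, assoc_symm_tmul,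
      LinearMap.lTensor_tmul, Algebra.TensorProduct.toLinearMap_includeRight,
      AlgebraTensorModule.mk_apply, map_tmul, LinearMap.coe_mk, AddHom.coe_mk, LinearMap.mul'_apply]
    induction g b using TensorProduct.induction_on with
    | zero => simp
    | tmul p q => simp [ractionMap_tmul]
    | add x y hx hy => simp_all [tmul_add, mul_add]
  exact LinearMap.congr_fun this x

lemma rTensor_ractionMap_assoc_symm_lTensor_includeLeft (f : H →ₗ[S] H) (x : M ⊗[S] H) :
    (ractionMap S H M).rTensor H ((TensorProduct.assoc S M H H).symm
      (((Algebra.TensorProduct.includeLeft (S := S)).toLinearMap ∘ₗ f).lTensor M x)) =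
    ractionMap S H M (f.lTensor M x) ⊗ₜ 1 := by
  induction x using TensorProduct.induction_on with
  | zero => simp
  | tmul m h => simp
  | add x y hx hy => simp_all [add_tmul]

variable {ρ : M →ₗ[S] M ⊗[S] H}

variable (ρ) in
def IsCompatibleCoaction : Prop :=
  ∀ (m : M) (h : H), ρ (MulOpposite.op h • m) =
    TensorProduct.map (ractionMap S H M) (LinearMap.mul' S H)
      (TensorProduct.tensorTensorTensorComm S M H H H (ρ m ⊗ₜ[S] comul h))

lemma IsCompatibleCoaction.apply_ractionMap (hρ : IsCompatibleCoaction ρ) (x : M ⊗[S] H) :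
    ρ (ractionMap S H M x) = TensorProduct.map (ractionMap S H M) (LinearMap.mul' S H)
      (TensorProduct.tensorTensorTensorComm S M H H H (TensorProduct.map ρ comul x)) := by
  induction x using TensorProduct.induction_on with
  | zero => simp
  | tmul m h => exact hρ m h
  | add x y hx hy => simp only [map_add, hx, hy]

lemma IsCompatibleCoaction.apply_smul_of_mem_coinvariants (hρ : IsCompatibleCoaction ρ) {c : M}
    (hc : c ∈ coinvariants S H M ρ) (h : H) :
    ρ (MulOpposite.op h • c) =
      (ractionMap S H M ∘ₗ TensorProduct.mk S M H c).rTensor H (comul h) := by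
  rw [hρ, show ρ c = c ⊗ₜ 1 from hc]
  induction comul (R := S) h using TensorProduct.induction_on with
  | zero => simp
  | tmul a b => simp [ractionMap_tmul]
  | add x y hx hy => simp_all [tmul_add]

variable (ρ) in
noncomputable def coinvariantsProj : M →ₗ[S] M :=
  ractionMap S H M ∘ₗ (antipode S).lTensor M ∘ₗ ρ

lemma ractionMap_rTensor_coinvariantsProj (hcoassoc : IsCoassocCoaction ρ)
    (hcounit : IsCounitalCoaction ρ) (m : M) :
    ractionMap S H M ((coinvariantsProj ρ).rTensor H (ρ m)) = m := by
  calc _ = ractionMap S H M ((ractionMap S H M ∘ₗ (antipode S).lTensor M).rTensor H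
          ((TensorProduct.assoc S M H H).symm ((comul (R := S)).lTensor M (ρ m)))) := by
        rw [← hcoassoc.rTensor_apply, ← LinearMap.rTensor_comp_apply]
        rfl
    _ = ractionMap S H M ((Algebra.linearMap S H ∘ₗ counit).lTensor M (ρ m)) := by
        rw [ractionMap_rTensor_assoc_symm, ← LinearMap.lTensor_comp_apply, LinearMap.comp_assoc,
          mul_antipode_rTensor_comul]
    _ = m := by
        rw [LinearMap.lTensor_comp_apply, ractionMap_lTensor_algebraMap, hcounit]

lemma coinvariantsProj_mem (hcoassoc : IsCoassocCoaction ρ) (hcompat : IsCompatibleCoaction ρ)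
    (m : M) : coinvariantsProj ρ m ∈ coinvariants S H M ρ := by
  show ρ (coinvariantsProj ρ m) = coinvariantsProj ρ m ⊗ₜ 1
  calc ρ (coinvariantsProj ρ m)
      = TensorProduct.map (ractionMap S H M) (LinearMap.mul' S H)
          (TensorProduct.tensorTensorTensorComm S M H H H ((comul ∘ₗ antipode S).lTensor _
            ((TensorProduct.assoc S M H H).symm ((comul (R := S)).lTensor M (ρ m))))) := by
        rw [coinvariantsProj, LinearMap.comp_apply, LinearMap.comp_apply,
          hcompat.apply_ractionMap, LinearMap.map_lTensor,
          ← LinearMap.lTensor_comp_rTensor (f := ρ), LinearMap.comp_apply, hcoassoc.rTensor_apply]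
    _ = (ractionMap S H M).rTensor H ((TensorProduct.assoc S M H H).symm
          (((Algebra.TensorProduct.includeLeft (S := S)).toLinearMap ∘ₗ antipode S).lTensor M
            (ρ m))) := by
        rw [map_ractionMap_mul'_tensorTensorTensorComm, ← LinearMap.lTensor_comp_apply,
          show _ ∘ₗ comul = _ from
            congrArg WithConv.ofConv includeRight_convMul_comul_comp_antipode]
    _ = coinvariantsProj ρ m ⊗ₜ 1 := rTensor_ractionMap_assoc_symm_lTensor_includeLeft _ _

lemma coinvariantsProj_smul_of_mem_coinvariants (hcompat : IsCompatibleCoaction ρ) {c : M}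
    (hc : c ∈ coinvariants S H M ρ) (h : H) :
    coinvariantsProj ρ (MulOpposite.op h • c) = counit (R := S) h • c := by
  have : ractionMap S H M ∘ₗ (antipode S).lTensor M ∘ₗ
      (ractionMap S H M ∘ₗ TensorProduct.mk S M H c).rTensor H =
      ractionMap S H M ∘ₗ TensorProduct.mk S M H c ∘ₗ LinearMap.mul' S H ∘ₗ
        (antipode S).lTensor H := by
    ext a b
    simp [ractionMap_tmul, mul_smul]
  calc coinvariantsProj ρ (MulOpposite.op h • c)
      = (ractionMap S H M ∘ₗ TensorProduct.mk S M H c ∘ₗ LinearMap.mul' S H ∘ₗ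
          (antipode S).lTensor H) (comul h) := by
        rw [← this]
        exact congrArg (ractionMap S H M ∘ₗ (antipode S).lTensor M)
          (hcompat.apply_smul_of_mem_coinvariants hc h)
    _ = counit (R := S) h • c := by
        simp [ractionMap_tmul, ← MulOpposite.algebraMap_apply]

noncomputable def coinvariantsTensorInv (hP : ∀ m, coinvariantsProj ρ m ∈ coinvariants S H M ρ) :
    M →ₗ[S] coinvariants S H M ρ ⊗[S] H :=
  ((coinvariantsProj ρ).codRestrict _ hP).rTensor H ∘ₗ ρ

lemma map_subtype_coinvariantsTensorInv (hP : ∀ m, coinvariantsProj ρ m ∈ coinvariants S H M ρ)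
    (m : M) :
    TensorProduct.map (coinvariants S H M ρ).subtype LinearMap.id (coinvariantsTensorInv hP m) =
      (coinvariantsProj ρ).rTensor H (ρ m) := by
  rw [coinvariantsTensorInv, LinearMap.comp_apply, LinearMap.map_rTensor,
    LinearMap.subtype_comp_codRestrict]
  rfl

lemma coinvariantsTensorInv_rightInverse (hcoassoc : IsCoassocCoaction ρ)
    (hcounit : IsCounitalCoaction ρ) (hP : ∀ m, coinvariantsProj ρ m ∈ coinvariants S H M ρ) :
    Function.RightInverse (coinvariantsTensorInv hP)
      (ractionMap S H M ∘ₗ TensorProduct.map (coinvariants S H M ρ).subtype LinearMap.id) := by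
  intro m
  rw [LinearMap.comp_apply, map_subtype_coinvariantsTensorInv,
    ractionMap_rTensor_coinvariantsProj hcoassoc hcounit]

lemma coinvariantsTensorInv_leftInverse (hcompat : IsCompatibleCoaction ρ)
    (hP : ∀ m, coinvariantsProj ρ m ∈ coinvariants S H M ρ) :
    Function.LeftInverse (coinvariantsTensorInv hP)
      (ractionMap S H M ∘ₗ TensorProduct.map (coinvariants S H M ρ).subtype LinearMap.id) := by
  suffices coinvariantsTensorInv hP ∘ₗ ractionMap S H M ∘ₗ
      TensorProduct.map (coinvariants S H M ρ).subtype LinearMap.id = LinearMap.id from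
    LinearMap.congr_fun this
  ext c h
  have hproj : (coinvariantsProj ρ).codRestrict _ hP ∘ₗ ractionMap S H M ∘ₗ
      TensorProduct.mk S M H c = LinearMap.toSpanSingleton S _ c ∘ₗ counit := by
    ext a
    exact coinvariantsProj_smul_of_mem_coinvariants hcompat c.2 a
  simp only [coinvariantsTensorInv, LinearMap.comp_apply, AlgebraTensorModule.curry_apply,
    LinearMap.restrictScalars_self, TensorProduct.curry_apply, TensorProduct.map_tmul,
    Submodule.subtype_apply, LinearMap.id_apply]
  rw [ractionMap_tmul, hcompat.apply_smul_of_mem_coinvariants c.2,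
    ← LinearMap.rTensor_comp_apply, hproj, LinearMap.rTensor_comp_apply, rTensor_counit_comul]
  simp

end HopfModule

theorem coinvariants_tensor_bijective
    (ρ : M →ₗ[S] M ⊗[S] H)
    -- coassociativity of the coaction
    (hcoassoc : ∀ m : M, (TensorProduct.assoc S M H H)
        (LinearMap.rTensor H ρ (ρ m)) =
      LinearMap.lTensor M (Coalgebra.comul (R := S)) (ρ m))
    -- counitality of the coaction
    (hcounit : ∀ m : M, (TensorProduct.rid S M)
        (LinearMap.lTensor M (Coalgebra.counit (R := S)) (ρ m)) = m)
    -- Hopf-semimodule compatibility: `ρ (m·h) = Σ m₍₀₎·h₁ ⊗ m₍₁₎·h₂`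
    (hcompat : ∀ (m : M) (h : H),
      ρ (MulOpposite.op h • m) =
        TensorProduct.map (ractionMap S H M) (LinearMap.mul' S H)
          ((TensorProduct.tensorTensorTensorComm S M H H H)
            (ρ m ⊗ₜ[S] Coalgebra.comul h))) :
    -- `ψ : M^{coH} ⊗[S] H → M`, `m ⊗ h ↦ m·h`, is bijective …
    Function.Bijective
      (ractionMap S H M ∘ₗ
        TensorProduct.map (coinvariants S H M ρ).subtype LinearMap.id) ∧
    -- … with inverse `m ↦ Σ (m₍₀₎·𝔞 m₍₁₎) ⊗ m₍₂₎`
    ∃ φ : M →ₗ[S] (coinvariants S H M ρ) ⊗[S] H,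
      (∀ x, φ ((ractionMap S H M ∘ₗ
          TensorProduct.map (coinvariants S H M ρ).subtype LinearMap.id) x) = x) ∧
      (∀ m, (ractionMap S H M ∘ₗ
          TensorProduct.map (coinvariants S H M ρ).subtype LinearMap.id) (φ m) = m) ∧
      (∀ m, TensorProduct.map (coinvariants S H M ρ).subtype LinearMap.id (φ m) =
        (TensorProduct.map
            (ractionMap S H M ∘ₗ
              LinearMap.lTensor M (HopfAlgebra.antipode (R := S) (A := H)))
            LinearMap.id ∘ₗ
          LinearMap.rTensor H ρ ∘ₗ ρ) m) := by
  have hP := coinvariantsProj_mem hcoassoc hcompat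
  have hleft := coinvariantsTensorInv_leftInverse hcompat hP
  have hright := coinvariantsTensorInv_rightInverse hcoassoc hcounit hP
  refine ⟨⟨hleft.injective, hright.surjective⟩, coinvariantsTensorInv hP, hleft, hright,
    fun m => ?_⟩
  rw [map_subtype_coinvariantsTensorInv, LinearMap.comp_apply, LinearMap.comp_apply,
    LinearMap.map_rTensor]
  rfl
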